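/- arXiv:2501.14216 — 2 statements merged into one kernel-verified Lean document; each statement's English description precedes it below -/
import Mathlib

section
/- Under the conditional-independence construction, the guided rate matrix R_t(a, b | c) := E_{a₁ ∼ p_{1|t}(·|a_t, c)}[R_{t|1}(a_t, b | a₁)] can be rewritten without reference to any time-dependent predictor as R_t(a_t, b | c) = E_{G₁ ∼ p_{1|t}(·|G_t)}[f_c(G₁) R_{t|1}(a_t, b | a₁)] / E_{G₁ ∼ p_{1|t}(·|G_t)}[f_c(G₁)], provided the denominator is positive. -/
/-- Under the conditional-independence construction (formalized on finite state
spaces via a joint pmf `w` of `(G_t, G₁, c)`, with `a : G → 𝒜` the discrete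
component of the clean data), the guided rate matrix
`R_t(a_t, b | c) := E_{G₁ ∼ p_{1|t}(·|G_t, c)}[R_{t|1}(a_t, b | a₁)]`
can be rewritten without any time-dependent predictor as
`E_{G₁ ∼ p_{1|t}(·|G_t)}[f_c(G₁) R_{t|1}(a_t, b | a₁)] / E_{G₁ ∼ p_{1|t}(·|G_t)}[f_c(G₁)]`,
where `f_c(G₁) = p(c|G₁)`, provided the denominator is positive. -/
theorem guided_rate_matrix_rewrite
    {T G C A : Type*} [Fintype T] [Fintype G] [Fintype C]
    (w : T → G → C → ℝ)
    (hw0 : ∀ t g c, 0 ≤ w t g c)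
    (hw1 : ∑ t, ∑ g, ∑ c, w t g c = 1)
    -- conditional independence of G_t and c given G₁:
    (hCI : ∀ t g c,
      w t g c * (∑ t', ∑ c', w t' g c')
        = (∑ c', w t g c') * (∑ t', w t' g c))
    (a : G → A)                 -- discrete component of the clean data
    (aₜ b : A)
    (R : A → A → A → ℝ)         -- R_{t|1}(a_t, b | a₁), a known rate matrix
    (hR : ∀ a₁, 0 ≤ R aₜ b a₁)
    (t : T) (c : C)
    (hGt : 0 < ∑ g', ∑ c', w t g' c')            -- p(G_t) > 0
    (hG1 : ∀ g, 0 < ∑ t', ∑ c', w t' g c')       -- p(G₁) > 0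
    (hGtc : 0 < ∑ g', w t g' c)                  -- p(G_t, c) > 0
    -- positivity of the denominator E_{p_{1|t}(·|G_t)}[f_c(G₁)]:
    (hden : 0 < ∑ g, ((∑ c', w t g c') / (∑ g', ∑ c', w t g' c'))
        * ((∑ t', w t' g c) / (∑ t', ∑ c', w t' g c'))) :
    -- E_{G₁ ∼ p_{1|t}(·|G_t, c)}[R_{t|1}(a_t, b | a₁)]
    (∑ g, (w t g c / ∑ g', w t g' c) * R aₜ b (a g))
      = (∑ g, ((∑ c', w t g c') / (∑ g', ∑ c', w t g' c'))
            * ((∑ t', w t' g c) / (∑ t', ∑ c', w t' g c')) * R aₜ b (a g))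
        / (∑ g, ((∑ c', w t g c') / (∑ g', ∑ c', w t g' c'))
            * ((∑ t', w t' g c) / (∑ t', ∑ c', w t' g c'))) := by

  set D := ∑ g', ∑ c', w t g' c' with hD
  have key : ∀ g, ((∑ c', w t g c') / D)
      * ((∑ t', w t' g c) / (∑ t', ∑ c', w t' g c')) = w t g c / D := by
    intro g
    have h1 := (hG1 g).ne'
    rw [div_mul_div_comm, ← hCI t g c, mul_div_mul_right _ _ h1]
  have hnum : (∑ g, ((∑ c', w t g c') / D)
      * ((∑ t', w t' g c) / (∑ t', ∑ c', w t' g c')) * R aₜ b (a g))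
      = (∑ g, w t g c * R aₜ b (a g)) / D := by
    rw [Finset.sum_div]
    exact Finset.sum_congr rfl fun g _ => by rw [key g, div_mul_eq_mul_div]
  have hden2 : (∑ g, ((∑ c', w t g c') / D)
      * ((∑ t', w t' g c) / (∑ t', ∑ c', w t' g c')))
      = (∑ g, w t g c) / D := by
    rw [Finset.sum_div]
    exact Finset.sum_congr rfl fun g _ => key g
  rw [hnum, hden2]
  have hcancel : (∑ g, w t g c * R aₜ b (a g)) / D / ((∑ g, w t g c) / D)
      = (∑ g, w t g c * R aₜ b (a g)) / (∑ g, w t g c) := by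
    rw [div_div_div_eq, mul_comm D, ← div_div_div_eq, div_self hGt.ne', div_one]
  rw [hcancel, Finset.sum_div]
  exact Finset.sum_congr rfl fun g _ => div_mul_eq_mul_div _ _ _
end

section
/- Let {p_t(a)}_{t∈[0,1]} be a family of probability distributions on a finite set 𝒜, given as the mixture p_t(a | c) = Σ_{a₁} p_{t|1}(a | a₁) p_data(a₁ | c), where for each a₁ the conditional flow satisfies the Kolmogorov equation ∂_t p_{t|1}(· | a₁) = p_{t|1}(· | a₁) R_{t|1}(·,· | a₁). Then the mixture satisfies ∂_t p_t(· | c) = p_t(· | c) R_t(·,· | c) with the guided rate matrix R_t(a, b | c) = E_{a₁ ∼ p_{1|t}(·|a, c)}[R_{t|1}(a, b | a₁)], where p_{1|t}(a₁ | a, c) ∝ p_{t|1}(a | a₁) p_data(a₁ | c), provided p_t(a | c) > 0. -/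
/-!
Differentiating the mixture term by term and exchanging the two finite sums gives
`∂_t p_t(b) = Σ_a Σ_{a₁} p_{t|1}(a|a₁) p_data(a₁) R_{t|1}(a,b|a₁)`. Writing each joint weight
`p_{t|1}(a|a₁) p_data(a₁)` as `p_t(a) · p_{1|t}(a₁|a)`, which is possible because `p_t(a) > 0`,
turns the inner sum into `p_t(a) R_t(a,b)`.
-/

open Finset

theorem HasDerivAt.sum_mul_const {𝕜 ι : Type*} [NontriviallyNormedField 𝕜] [Fintype ι]
    {f : ι → 𝕜 → 𝕜} {f' : ι → 𝕜} (w : ι → 𝕜) {t : 𝕜}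
    (hf : ∀ i, HasDerivAt (f i) (f' i) t) :
    HasDerivAt (fun s => ∑ i, f i s * w i) (∑ i, f' i * w i) t :=
  HasDerivAt.fun_sum fun i _ => (hf i).mul_const (w i)

theorem Finset.mul_sum_div_mul {K ι : Type*} [Field K] (s : Finset ι) (x r : ι → K) {S : K}
    (hS : S ≠ 0) : S * ∑ i ∈ s, x i / S * r i = ∑ i ∈ s, x i * r i := by
  rw [mul_sum]
  refine sum_congr rfl fun i _ => ?_
  field_simp

theorem guided_rate_matrix_generates_mixture_general
    {A : Type*} [Fintype A]
    (pcond : ℝ → A → A → ℝ)       -- p_{t|1}(a | a₁)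
    (Rcond : ℝ → A → A → A → ℝ)   -- (t, a, b, a₁) ↦ R_{t|1}(a, b | a₁)
    (pdata : A → ℝ)               -- p_data(a₁ | c), for the fixed target c
    -- Kolmogorov equation for each conditional flow:
    (hK : ∀ t a₁ b, HasDerivAt (fun s => pcond s b a₁)
      (∑ a, pcond t a a₁ * Rcond t a b a₁) t)
    (t : ℝ) (b : A)
    (hpos : ∀ a, 0 < ∑ a₁, pcond t a a₁ * pdata a₁) :
    HasDerivAt (fun s => ∑ a₁, pcond s b a₁ * pdata a₁)
      (∑ a, (∑ a₁, pcond t a a₁ * pdata a₁) *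
        (∑ a₁, (pcond t a a₁ * pdata a₁ / (∑ a₁', pcond t a a₁' * pdata a₁'))
          * Rcond t a b a₁)) t := by
  refine (HasDerivAt.sum_mul_const pdata fun a₁ => hK t a₁ b).congr_deriv ?_
  calc ∑ a₁, (∑ a, pcond t a a₁ * Rcond t a b a₁) * pdata a₁
      = ∑ a, ∑ a₁, pcond t a a₁ * pdata a₁ * Rcond t a b a₁ := by
        simp_rw [sum_mul]
        rw [sum_comm]
        exact sum_congr rfl fun a _ => sum_congr rfl fun a₁ _ => by ring
    _ = _ := sum_congr rfl fun a _ => (mul_sum_div_mul _ _ _ (hpos a).ne').symm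

/-- **Guided rate matrix generates the guided marginal flow (finite state
space).** If each conditional flow `p_{t|1}(·|a₁)` satisfies the Kolmogorov
equation `∂_t p_{t|1} = p_{t|1} R_{t|1}(·,·|a₁)`, then the mixture
`p_t(a|c) = Σ_{a₁} p_{t|1}(a|a₁) p_data(a₁|c)` satisfies
`∂_t p_t(·|c) = p_t(·|c) R_t(·,·|c)` with the guided rate matrix
`R_t(a,b|c) = E_{a₁ ∼ p_{1|t}(·|a,c)}[R_{t|1}(a,b|a₁)]`, where
`p_{1|t}(a₁|a,c) = p_{t|1}(a|a₁) p_data(a₁|c) / p_t(a|c)`, provided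
`p_t(a|c) > 0`. -/
theorem guided_rate_matrix_generates_mixture
    {A : Type*} [Fintype A] [DecidableEq A]
    (pcond : ℝ → A → A → ℝ)       -- p_{t|1}(a | a₁)
    (Rcond : ℝ → A → A → A → ℝ)   -- (t, a, b, a₁) ↦ R_{t|1}(a, b | a₁)
    (pdata : A → ℝ)               -- p_data(a₁ | c), for the fixed target c
    (hprob0 : ∀ t a₁ a, 0 ≤ pcond t a a₁)
    (hprob1 : ∀ t a₁, ∑ a, pcond t a a₁ = 1)
    (hrate_nonneg : ∀ t a₁ a b, a ≠ b → 0 ≤ Rcond t a b a₁)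
    (hrate_rowsum : ∀ t a₁ a, ∑ b, Rcond t a b a₁ = 0)
    (hpdata0 : ∀ a₁, 0 ≤ pdata a₁)
    (hpdata1 : ∑ a₁, pdata a₁ = 1)
    -- Kolmogorov equation for each conditional flow:
    (hK : ∀ t a₁ b, HasDerivAt (fun s => pcond s b a₁)
      (∑ a, pcond t a a₁ * Rcond t a b a₁) t)
    (t : ℝ) (b : A)
    (hpos : ∀ a, 0 < ∑ a₁, pcond t a a₁ * pdata a₁) :
    HasDerivAt (fun s => ∑ a₁, pcond s b a₁ * pdata a₁)
      (∑ a, (∑ a₁, pcond t a a₁ * pdata a₁) *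
        (∑ a₁, (pcond t a a₁ * pdata a₁ / (∑ a₁', pcond t a a₁' * pdata a₁'))
          * Rcond t a b a₁)) t :=
  guided_rate_matrix_generates_mixture_general pcond Rcond pdata hK t b hpos
end
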